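/- Let U : ℝ^d → ℝ be (L,α)-weakly smooth, fix x' ∈ ℝ^d, λ > 0 and μ > 0, and set Ū(x) = U(x) + (λ/2)‖x − x'‖₂². Let p̄* and p̄*_μ be the probability measures with densities proportional to exp(−Ū) and exp(−Ū_μ) respectively. Then ‖p̄* − p̄*_μ‖_TV ≤ L·μ^{1+α}·d^{(1+α)/2}/(1+α) + λ·μ²·d/2. -/

import Mathlib

open MeasureTheory Real
open scoped InnerProductSpace ENNReal NNReal

lemma integrable_gauss1d : Integrable (fun x : ℝ => rexp (-x ^ 2 / 2)) := by
  have := integrable_exp_neg_mul_sq (b := (1/2 : ℝ)) (by norm_num)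
  refine this.congr ?_
  filter_upwards with x
  rw [show -(1/2 : ℝ) * x ^ 2 = -x ^ 2 / 2 by ring]

lemma integrable_sq_gauss1d : Integrable (fun x : ℝ => x ^ 2 * rexp (-x ^ 2 / 2)) := by
  have := integrable_rpow_mul_exp_neg_mul_sq (b := (1/2 : ℝ)) (by norm_num) (s := 2) (by norm_num)
  refine this.congr ?_
  filter_upwards with x
  have h2 : x ^ (2:ℝ) = x ^ (2:ℕ) := by
    rw [← Real.rpow_natCast]; norm_num
  rw [h2, show -(1/2 : ℝ) * x ^ 2 = -x ^ 2 / 2 by ring]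

lemma integral_gauss1d : ∫ x : ℝ, rexp (-x ^ 2 / 2) = √(2 * π) := by
  have := integral_gaussian (1/2 : ℝ)
  rw [show π / (1/2 : ℝ) = 2 * π by ring] at this
  rw [← this]
  congr 1 with x
  rw [show -(1/2 : ℝ) * x ^ 2 = -x ^ 2 / 2 by ring]

lemma integral_sq_gauss1d : ∫ x : ℝ, x ^ 2 * rexp (-x ^ 2 / 2) = √(2 * π) := by
  have hmul : Integrable (fun x : ℝ => x * rexp (-x ^ 2 / 2)) := by
    have := integrable_mul_exp_neg_mul_sq (b := (1/2 : ℝ)) (by norm_num)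
    refine this.congr ?_
    filter_upwards with x
    rw [show -(1/2 : ℝ) * x ^ 2 = -x ^ 2 / 2 by ring]
  have hderiv : ∀ x : ℝ, HasDerivAt (fun x : ℝ => x * rexp (-x ^ 2 / 2))
      (rexp (-x ^ 2 / 2) - x ^ 2 * rexp (-x ^ 2 / 2)) x := by
    intro x
    have h1 : HasDerivAt (fun x : ℝ => -x ^ 2 / 2) (-x) x := by
      have := ((hasDerivAt_pow 2 x).neg).div_const 2
      refine this.congr_deriv ?_
      ring
    have h2 := h1.exp
    have h3 := (hasDerivAt_id x).mul h2
    refine h3.congr_deriv ?_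
    simp [id]
    ring
  have hint' : Integrable (fun x : ℝ => rexp (-x ^ 2 / 2) - x ^ 2 * rexp (-x ^ 2 / 2)) :=
    integrable_gauss1d.sub integrable_sq_gauss1d
  have h0 := integral_eq_zero_of_hasDerivAt_of_integrable hderiv hint' hmul
  rw [integral_sub integrable_gauss1d integrable_sq_gauss1d, sub_eq_zero] at h0
  rw [← h0, integral_gauss1d]


variable {d : ℕ}


lemma integrable_exp_norm_sq_add {b : ℝ} (hb : 0 < b) (w : EuclideanSpace ℝ (Fin d)) :
    Integrable (fun v : EuclideanSpace ℝ (Fin d) => rexp (-b * ‖v‖ ^ 2 + ⟪w, v⟫_ℝ)) := by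
  have h := GaussianFourier.integrable_cexp_neg_mul_sq_norm_add
    (V := EuclideanSpace ℝ (Fin d)) (b := (b : ℂ)) (by simpa using hb) 1 w
  have h2 := h.norm
  refine h2.congr ?_
  filter_upwards with v
  have hre : (-(b:ℂ) * (‖v‖:ℂ) ^ 2 + 1 * (⟪w, v⟫_ℝ : ℂ)) = ((-b * ‖v‖ ^ 2 + ⟪w, v⟫_ℝ : ℝ) : ℂ) := by
    push_cast; ring
  rw [hre, Complex.norm_exp, Complex.ofReal_re]

lemma integrable_exp_norm_sq {b : ℝ} (hb : 0 < b) :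
    Integrable (fun v : EuclideanSpace ℝ (Fin d) => rexp (-b * ‖v‖ ^ 2)) := by
  have := integrable_exp_norm_sq_add hb (0 : EuclideanSpace ℝ (Fin d))
  refine this.congr ?_
  filter_upwards with v
  simp

lemma integrable_exp_gauss : Integrable (fun v : EuclideanSpace ℝ (Fin d) => rexp (-‖v‖ ^ 2 / 2)) := by
  have := integrable_exp_norm_sq (d := d) (b := (1/2 : ℝ)) (by norm_num)
  refine this.congr ?_
  filter_upwards with v
  rw [show -(1/2 : ℝ) * ‖v‖ ^ 2 = -‖v‖ ^ 2 / 2 by ring]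

lemma sq_exp_bound (t : ℝ) : t ^ 2 * rexp (-t ^ 2 / 2) ≤ 4 * rexp (-(1/4) * t ^ 2) := by
  have h1 : t ^ 2 ≤ 4 * rexp (t ^ 2 / 4) := by
    have := Real.add_one_le_exp (t ^ 2 / 4)
    nlinarith [Real.exp_pos (t ^ 2 / 4)]
  calc t ^ 2 * rexp (-t ^ 2 / 2) ≤ (4 * rexp (t ^ 2 / 4)) * rexp (-t ^ 2 / 2) :=
        mul_le_mul_of_nonneg_right h1 (Real.exp_pos _).le
    _ = 4 * rexp (-(1/4) * t ^ 2) := by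
        rw [mul_assoc, ← Real.exp_add]; congr 2; ring

lemma integrable_sq_exp_gauss :
    Integrable (fun v : EuclideanSpace ℝ (Fin d) => ‖v‖ ^ 2 * rexp (-‖v‖ ^ 2 / 2)) := by
  refine Integrable.mono' ((integrable_exp_norm_sq (d := d) (b := (1/4 : ℝ)) (by norm_num)).const_mul 4)
    ?_ ?_
  · exact ((continuous_norm.pow 2).mul (((continuous_norm.pow 2).neg.div_const 2).rexp)).aestronglyMeasurable
  · filter_upwards with v
    rw [Real.norm_eq_abs, abs_of_nonneg (by positivity)]
    exact sq_exp_bound ‖v‖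

lemma integrable_norm_exp_gauss :
    Integrable (fun v : EuclideanSpace ℝ (Fin d) => ‖v‖ * rexp (-‖v‖ ^ 2 / 2)) := by
  refine Integrable.mono' (integrable_exp_gauss.add integrable_sq_exp_gauss) ?_ ?_
  · exact (continuous_norm.mul (((continuous_norm.pow 2).neg.div_const 2).rexp)).aestronglyMeasurable
  · filter_upwards with v
    rw [Real.norm_eq_abs, abs_of_nonneg (by positivity)]
    have h1 : ‖v‖ ≤ 1 + ‖v‖ ^ 2 := by nlinarith [norm_nonneg v, sq_nonneg (‖v‖ - 1)]
    have := mul_le_mul_of_nonneg_right h1 (Real.exp_pos (-‖v‖ ^ 2 / 2)).le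
    simp only [Pi.add_apply]
    nlinarith [this]

lemma integrable_inner_exp_gauss (a : EuclideanSpace ℝ (Fin d)) :
    Integrable (fun v : EuclideanSpace ℝ (Fin d) => ⟪a, v⟫_ℝ * rexp (-‖v‖ ^ 2 / 2)) := by
  refine Integrable.mono' (integrable_norm_exp_gauss.const_mul ‖a‖) ?_ ?_
  · exact ((continuous_const.inner continuous_id').mul
      (((continuous_norm.pow 2).neg.div_const 2).rexp)).aestronglyMeasurable
  · filter_upwards with v
    rw [Real.norm_eq_abs, abs_mul, abs_of_nonneg (Real.exp_pos _).le, ← mul_assoc]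
    exact mul_le_mul_of_nonneg_right (abs_real_inner_le_norm a v)
      (by positivity)

lemma integral_inner_exp_gauss (a : EuclideanSpace ℝ (Fin d)) :
    ∫ v : EuclideanSpace ℝ (Fin d), ⟪a, v⟫_ℝ * rexp (-‖v‖ ^ 2 / 2) = 0 := by
  have h := integral_neg_eq_self
    (fun v : EuclideanSpace ℝ (Fin d) => ⟪a, v⟫_ℝ * rexp (-‖v‖ ^ 2 / 2)) volume
  simp only [inner_neg_right, norm_neg, neg_mul] at h
  rw [integral_neg] at h
  linarith [h]

lemma integral_exp_gauss :
    ∫ v : EuclideanSpace ℝ (Fin d), rexp (-‖v‖ ^ 2 / 2) = (2 * π) ^ ((d : ℝ) / 2) := by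
  have h := GaussianFourier.integral_rexp_neg_mul_sq_norm
    (V := EuclideanSpace ℝ (Fin d)) (b := (1/2 : ℝ)) (by norm_num)
  rw [finrank_euclideanSpace_fin] at h
  rw [show π / (1/2 : ℝ) = 2 * π by ring] at h
  rw [← h]
  congr 1 with v
  rw [show -(1/2 : ℝ) * ‖v‖ ^ 2 = -‖v‖ ^ 2 / 2 by ring]


lemma integral_sq_norm_exp_gauss :
    ∫ v : EuclideanSpace ℝ (Fin d), ‖v‖ ^ 2 * rexp (-‖v‖ ^ 2 / 2)
      = d * (2 * π) ^ ((d : ℝ) / 2) := by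
  classical
  set F : Fin d → Fin d → ℝ → ℝ := fun i j t =>
    if j = i then t ^ 2 * rexp (-t ^ 2 / 2) else rexp (-t ^ 2 / 2) with hF
  have mp := (EuclideanSpace.volume_preserving_symm_measurableEquiv_toLp (Fin d)).symm
  rw [← mp.integral_comp (MeasurableEquiv.measurableEmbedding _)]
  have hnorm : ∀ x : Fin d → ℝ,
      ‖(MeasurableEquiv.toLp 2 (Fin d → ℝ)).symm.symm x‖ ^ 2 = ∑ i, x i ^ 2 := by
    intro x
    rw [EuclideanSpace.norm_eq, Real.sq_sqrt (by positivity)]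
    simp [sq_abs]
  have hrw : ∀ x : Fin d → ℝ,
      ‖(MeasurableEquiv.toLp 2 (Fin d → ℝ)).symm.symm x‖ ^ 2
        * rexp (-‖(MeasurableEquiv.toLp 2 (Fin d → ℝ)).symm.symm x‖ ^ 2 / 2)
      = ∑ i, ∏ j, F i j (x j) := by
    intro x
    rw [hnorm]
    have hexp : rexp (-(∑ i, x i ^ 2) / 2) = ∏ j, rexp (-x j ^ 2 / 2) := by
      rw [← Real.exp_sum]
      congr 1
      rw [← Finset.sum_div, Finset.sum_neg_distrib]
    rw [hexp, Finset.sum_mul]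
    refine Finset.sum_congr rfl fun i _ => ?_
    rw [← Finset.mul_prod_erase Finset.univ _ (Finset.mem_univ i),
        ← Finset.mul_prod_erase Finset.univ (fun j => F i j (x j)) (Finset.mem_univ i)]
    rw [show F i i (x i) = x i ^ 2 * rexp (-x i ^ 2 / 2) by simp [hF]]
    rw [Finset.prod_congr rfl (fun j hj => show F i j (x j) = rexp (-x j ^ 2 / 2) by
      simp [hF, (Finset.ne_of_mem_erase hj)])]
    ring
  rw [integral_congr_ae (Filter.Eventually.of_forall fun x => hrw x)]
  have hint : ∀ i j : Fin d, Integrable (fun t => F i j t) := by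
    intro i j
    by_cases h : j = i
    · simpa [hF, h] using integrable_sq_gauss1d
    · simpa [hF, h] using integrable_gauss1d
  rw [integral_finset_sum (μ := volume) _ fun i _ => Integrable.fintype_prod fun j => hint i j]
  have hprod : ∀ i : Fin d, ∫ x : Fin d → ℝ, ∏ j, F i j (x j) = √(2 * π) ^ d := by
    intro i
    rw [integral_fintype_prod_volume_eq_prod (f := F i)]
    have : ∀ j : Fin d, ∫ t : ℝ, F i j t = √(2 * π) := by
      intro j
      by_cases h : j = i
      · simpa [hF, h] using integral_sq_gauss1d
      · simpa [hF, h] using integral_gauss1d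
    rw [Finset.prod_congr rfl fun j _ => this j, Finset.prod_const, Finset.card_univ,
      Fintype.card_fin]
  rw [Finset.sum_congr rfl fun i _ => hprod i, Finset.sum_const, Finset.card_univ,
    Fintype.card_fin, nsmul_eq_mul]
  congr 1
  rw [Real.sqrt_eq_rpow, ← Real.rpow_natCast ((2 * π) ^ ((1:ℝ)/2)) d,
    ← Real.rpow_mul (by positivity)]
  congr 1
  ring

/-- The standard Gaussian measure `N(0, I_d)` on `ℝ^d`. -/
noncomputable def stdGaussian (d : ℕ) : Measure (EuclideanSpace ℝ (Fin d)) :=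
  volume.withDensity fun x =>
    ENNReal.ofReal ((2 * π) ^ (-(d : ℝ) / 2) * Real.exp (-‖x‖ ^ 2 / 2))

section StdGaussian

noncomputable def gaussDens (d : ℕ) (x : EuclideanSpace ℝ (Fin d)) : ℝ :=
  (2 * π) ^ (-(d : ℝ) / 2) * rexp (-‖x‖ ^ 2 / 2)

lemma gaussDens_cont : Continuous (gaussDens d) :=
  continuous_const.mul (((continuous_norm.pow 2).neg.div_const 2).rexp)

lemma gaussDens_nonneg (x : EuclideanSpace ℝ (Fin d)) : 0 ≤ gaussDens d x := by
  unfold gaussDens; positivity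

lemma gaussDens_meas : Measurable (fun x : EuclideanSpace ℝ (Fin d) => (gaussDens d x).toNNReal) :=
  gaussDens_cont.measurable.real_toNNReal

lemma stdGaussian_eq_coe (d : ℕ) :
    stdGaussian d = volume.withDensity
      (fun x : EuclideanSpace ℝ (Fin d) => (((gaussDens d x).toNNReal : ℝ≥0) : ℝ≥0∞)) := rfl

lemma integral_stdGaussian (f : EuclideanSpace ℝ (Fin d) → ℝ) :
    ∫ ξ, f ξ ∂(stdGaussian d) = ∫ x, gaussDens d x * f x := by
  rw [stdGaussian_eq_coe, integral_withDensity_eq_integral_smul gaussDens_meas f]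
  congr 1 with x
  rw [NNReal.smul_def, smul_eq_mul, Real.coe_toNNReal _ (gaussDens_nonneg x)]

lemma integrable_stdGaussian_iff (f : EuclideanSpace ℝ (Fin d) → ℝ) :
    Integrable f (stdGaussian d) ↔ Integrable (fun x => gaussDens d x * f x) := by
  rw [stdGaussian_eq_coe, integrable_withDensity_iff_integrable_smul gaussDens_meas]
  refine integrable_congr (Filter.Eventually.of_forall fun x => ?_)
  simp only [NNReal.smul_def, smul_eq_mul]
  rw [Real.coe_toNNReal _ (gaussDens_nonneg x)]

lemma const_rpow_arith :
    ((2 * π) ^ (-(d : ℝ) / 2) : ℝ) * (2 * π) ^ ((d : ℝ) / 2) = 1 := by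
  rw [← Real.rpow_add (by positivity), neg_div, neg_add_cancel, Real.rpow_zero]

lemma integrable_gaussDens : Integrable (gaussDens d) := by
  unfold gaussDens
  exact integrable_exp_gauss.const_mul _

instance isProbStdGaussian (d : ℕ) : IsProbabilityMeasure (stdGaussian d) := by
  constructor
  rw [stdGaussian_eq_coe, withDensity_apply _ MeasurableSet.univ, setLIntegral_univ]
  have h1 : ∀ x : EuclideanSpace ℝ (Fin d),
      (((gaussDens d x).toNNReal : ℝ≥0) : ℝ≥0∞) = ENNReal.ofReal (gaussDens d x) := fun x => rfl
  rw [lintegral_congr h1,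
    ← ofReal_integral_eq_lintegral_ofReal integrable_gaussDens
      (Filter.Eventually.of_forall fun x => gaussDens_nonneg x)]
  unfold gaussDens
  rw [integral_const_mul, integral_exp_gauss, const_rpow_arith]
  exact ENNReal.ofReal_one

lemma integrable_norm_sq_stdGaussian :
    Integrable (fun ξ : EuclideanSpace ℝ (Fin d) => ‖ξ‖ ^ 2) (stdGaussian d) := by
  rw [integrable_stdGaussian_iff]
  have h : Integrable (fun x : EuclideanSpace ℝ (Fin d) =>
      (2 * π) ^ (-(d : ℝ) / 2) * (‖x‖ ^ 2 * rexp (-‖x‖ ^ 2 / 2))) :=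
    integrable_sq_exp_gauss.const_mul _
  refine h.congr (Filter.Eventually.of_forall fun x => ?_)
  unfold gaussDens; ring

lemma integrable_norm_stdGaussian :
    Integrable (fun ξ : EuclideanSpace ℝ (Fin d) => ‖ξ‖) (stdGaussian d) := by
  rw [integrable_stdGaussian_iff]
  have h : Integrable (fun x : EuclideanSpace ℝ (Fin d) =>
      (2 * π) ^ (-(d : ℝ) / 2) * (‖x‖ * rexp (-‖x‖ ^ 2 / 2))) :=
    integrable_norm_exp_gauss.const_mul _
  refine h.congr (Filter.Eventually.of_forall fun x => ?_)
  unfold gaussDens; ring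

lemma integrable_inner_stdGaussian (a : EuclideanSpace ℝ (Fin d)) :
    Integrable (fun ξ : EuclideanSpace ℝ (Fin d) => ⟪a, ξ⟫_ℝ) (stdGaussian d) := by
  rw [integrable_stdGaussian_iff]
  have h : Integrable (fun x : EuclideanSpace ℝ (Fin d) =>
      (2 * π) ^ (-(d : ℝ) / 2) * (⟪a, x⟫_ℝ * rexp (-‖x‖ ^ 2 / 2))) :=
    (integrable_inner_exp_gauss a).const_mul _
  refine h.congr (Filter.Eventually.of_forall fun x => ?_)
  unfold gaussDens; ring

lemma integral_inner_stdGaussian (a : EuclideanSpace ℝ (Fin d)) :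
    ∫ ξ, ⟪a, ξ⟫_ℝ ∂(stdGaussian d) = 0 := by
  rw [integral_stdGaussian]
  have h : ∀ x : EuclideanSpace ℝ (Fin d), gaussDens d x * ⟪a, x⟫_ℝ
      = (2 * π) ^ (-(d : ℝ) / 2) * (⟪a, x⟫_ℝ * rexp (-‖x‖ ^ 2 / 2)) := fun x => by
    unfold gaussDens; ring
  rw [integral_congr_ae (Filter.Eventually.of_forall h), integral_const_mul,
    integral_inner_exp_gauss, mul_zero]

lemma integral_norm_sq_stdGaussian :
    ∫ ξ, ‖ξ‖ ^ 2 ∂(stdGaussian d) = d := by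
  rw [integral_stdGaussian]
  have h : ∀ x : EuclideanSpace ℝ (Fin d), gaussDens d x * ‖x‖ ^ 2
      = (2 * π) ^ (-(d : ℝ) / 2) * (‖x‖ ^ 2 * rexp (-‖x‖ ^ 2 / 2)) := fun x => by
    unfold gaussDens; ring
  rw [integral_congr_ae (Filter.Eventually.of_forall h), integral_const_mul,
    integral_sq_norm_exp_gauss, ← mul_assoc, mul_comm ((2 * π) ^ (-(d : ℝ) / 2)) (d : ℝ),
    mul_assoc, const_rpow_arith, mul_one]

end StdGaussian

section Moment

variable {d : ℕ}

lemma norm_rpow_le_one_add_sq {β : ℝ} (hβ1 : 1 ≤ β) (hβ2 : β ≤ 2)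
    (ξ : EuclideanSpace ℝ (Fin d)) : ‖ξ‖ ^ β ≤ 1 + ‖ξ‖ ^ 2 := by
  rcases le_or_gt ‖ξ‖ 1 with h | h
  · have h1 : ‖ξ‖ ^ β ≤ 1 := Real.rpow_le_one (norm_nonneg ξ) h (by linarith : (0:ℝ) ≤ β)
    nlinarith [sq_nonneg ‖ξ‖]
  · have h2 : ‖ξ‖ ^ β ≤ ‖ξ‖ ^ (2 : ℝ) :=
      Real.rpow_le_rpow_of_exponent_le h.le hβ2
    have h3 : ‖ξ‖ ^ (2 : ℝ) = ‖ξ‖ ^ (2 : ℕ) := by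
      rw [show (2:ℝ) = ((2:ℕ):ℝ) by norm_num, Real.rpow_natCast]
    rw [h3] at h2
    nlinarith [h2]

lemma integrable_rpow_norm_stdGaussian {β : ℝ} (hβ1 : 1 ≤ β) (hβ2 : β ≤ 2) :
    Integrable (fun ξ : EuclideanSpace ℝ (Fin d) => ‖ξ‖ ^ β) (stdGaussian d) := by
  refine Integrable.mono' ((integrable_const 1).add integrable_norm_sq_stdGaussian) ?_ ?_
  · exact (continuous_norm.rpow_const fun x => Or.inr (by linarith)).aestronglyMeasurable
  · filter_upwards with ξ
    rw [Real.norm_eq_abs, abs_of_nonneg (Real.rpow_nonneg (norm_nonneg ξ) β)]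
    simpa using norm_rpow_le_one_add_sq hβ1 hβ2 ξ

lemma integral_rpow_norm_stdGaussian_le {β : ℝ} (hβ1 : 1 ≤ β) (hβ2 : β ≤ 2) :
    ∫ ξ, ‖ξ‖ ^ β ∂(stdGaussian d) ≤ (d : ℝ) ^ (β / 2) := by
  rcases Nat.eq_zero_or_pos d with hd | hd
  · have hz : ∀ ξ : EuclideanSpace ℝ (Fin d), ‖ξ‖ ^ β = 0 := by
      intro ξ
      have hξ : ‖ξ‖ = 0 := by
        subst hd
        have : ξ = 0 := Subsingleton.elim _ _
        rw [this, norm_zero]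
      rw [hξ, Real.zero_rpow (by linarith)]
    rw [integral_congr_ae (Filter.Eventually.of_forall hz), integral_zero]
    exact Real.rpow_nonneg (by positivity) _
  · set p := β / 2 with hp
    have hm0 : (0 : ℝ) < (d : ℝ) := by exact_mod_cast hd
    have hp0 : 0 ≤ p := by simp [hp]; linarith
    have hp1 : p ≤ 1 := by simp [hp]; linarith
    have key : ∀ ξ : EuclideanSpace ℝ (Fin d),
        ‖ξ‖ ^ β ≤ (d : ℝ) ^ p + p * (d : ℝ) ^ (p - 1) * (‖ξ‖ ^ 2 - d) := by
      intro ξ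
      have hrw : ‖ξ‖ ^ β = ((‖ξ‖ ^ 2 : ℝ)) ^ p := by
        rw [← Real.rpow_natCast ‖ξ‖ 2, ← Real.rpow_mul (norm_nonneg ξ)]
        congr 1
        push_cast
        rw [hp]; ring
      set t : ℝ := ‖ξ‖ ^ 2 with ht
      have ht0 : 0 ≤ t := by positivity
      set s : ℝ := t / d - 1 with hs
      have hs1 : -1 ≤ s := by
        rw [hs]
        have : 0 ≤ t / d := by positivity
        linarith
      have hb := rpow_one_add_le_one_add_mul_self hs1 hp0 hp1
      have hts : t = (d : ℝ) * (1 + s) := by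
        rw [hs]
        field_simp
        ring
      have h1s : (0:ℝ) ≤ 1 + s := by linarith
      have hmul : t ^ p = (d : ℝ) ^ p * (1 + s) ^ p := by
        rw [hts, Real.mul_rpow hm0.le h1s]
      have hfin : (d:ℝ) ^ p * (1 + s) ^ p ≤ (d:ℝ) ^ p * (1 + p * s) :=
        mul_le_mul_of_nonneg_left hb (Real.rpow_nonneg hm0.le p)
      have hpow : (d:ℝ) ^ p * s = (d:ℝ) ^ (p-1) * (t - d) := by
        rw [Real.rpow_sub hm0, Real.rpow_one, hs]
        field_simp
      rw [hrw, hmul]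
      calc (d:ℝ) ^ p * (1 + s) ^ p ≤ (d:ℝ) ^ p * (1 + p * s) := hfin
        _ = (d:ℝ) ^ p + p * ((d:ℝ) ^ p * s) := by ring
        _ = (d:ℝ) ^ p + p * (d:ℝ) ^ (p-1) * (t - d) := by rw [hpow]; ring
    have hintr : Integrable (fun ξ : EuclideanSpace ℝ (Fin d) =>
        (d : ℝ) ^ p + p * (d : ℝ) ^ (p - 1) * (‖ξ‖ ^ 2 - (d:ℝ))) (stdGaussian d) := by
      refine (integrable_const _).add ?_
      exact (integrable_norm_sq_stdGaussian.sub (integrable_const _)).const_mul _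
    have hmono := integral_mono (integrable_rpow_norm_stdGaussian hβ1 hβ2) hintr key
    refine hmono.trans ?_
    have h2 : Integrable (fun ξ : EuclideanSpace ℝ (Fin d) =>
        p * (d : ℝ) ^ (p - 1) * (‖ξ‖ ^ 2 - (d:ℝ))) (stdGaussian d) := by
      have := (integrable_norm_sq_stdGaussian (d := d)).sub (integrable_const ((d:ℝ)))
      exact this.const_mul _
    rw [integral_add (integrable_const _) h2, integral_const, integral_const_mul,
      integral_sub integrable_norm_sq_stdGaussian (integrable_const _),
      integral_norm_sq_stdGaussian, integral_const]
    simp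

section Descent

variable {d : ℕ}


lemma descent_lemma (U : EuclideanSpace ℝ (Fin d) → ℝ)
    (gU : EuclideanSpace ℝ (Fin d) → EuclideanSpace ℝ (Fin d))
    (L α : ℝ) (hL : 0 ≤ L) (hα0 : 0 ≤ α) (hα1 : α ≤ 1)
    (hconv : ∀ x y, U x + ⟪gU x, y - x⟫_ℝ ≤ U y)
    (hHolder : ∀ x y, ‖gU x - gU y‖ ≤ L * ‖x - y‖ ^ α)
    (x y : EuclideanSpace ℝ (Fin d)) :
    U y ≤ U x + ⟪gU x, y - x⟫_ℝ + L / (1 + α) * ‖y - x‖ ^ (1 + α) := by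
  rcases eq_or_lt_of_le hα0 with hα | hα
  · -- α = 0
    subst hα
    have h1 := hconv y x
    have h2 : U y ≤ U x + ⟪gU y, y - x⟫_ℝ := by
      have : ⟪gU y, x - y⟫_ℝ = -⟪gU y, y - x⟫_ℝ := by
        rw [← inner_neg_right, neg_sub]
      linarith [h1, this.le, this.ge]
    have h3 : ⟪gU y, y - x⟫_ℝ = ⟪gU x, y - x⟫_ℝ + ⟪gU y - gU x, y - x⟫_ℝ := by
      rw [← inner_add_left]
      congr 1
      abel
    have h4 : ⟪gU y - gU x, y - x⟫_ℝ ≤ L * ‖y - x‖ := by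
      calc ⟪gU y - gU x, y - x⟫_ℝ ≤ ‖gU y - gU x‖ * ‖y - x‖ := real_inner_le_norm _ _
        _ ≤ (L * ‖y - x‖ ^ (0:ℝ)) * ‖y - x‖ := by
            exact mul_le_mul_of_nonneg_right (hHolder y x) (norm_nonneg _)
        _ ≤ L * ‖y - x‖ := by
            rcases eq_or_ne (y - x) 0 with h | h
            · simp [h]
            · rw [Real.rpow_zero, mul_one]
      
    have h5 : L / (1 + 0) * ‖y - x‖ ^ ((1:ℝ) + 0) = L * ‖y - x‖ := by
      norm_num
    rw [h5]
    linarith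
  · -- 0 < α
    have hgcont : Continuous gU := by
      rw [continuous_iff_continuousAt]
      intro z
      have hten : Filter.Tendsto (fun w => gU w - gU z) (nhds z) (nhds 0) := by
        apply squeeze_zero_norm (fun w => hHolder w z)
        have hcw : Continuous (fun w : EuclideanSpace ℝ (Fin d) => ‖w - z‖) :=
          (continuous_id.sub continuous_const).norm
        have hb : Filter.Tendsto (fun w : EuclideanSpace ℝ (Fin d) => ‖w - z‖) (nhds z) (nhds 0) := by
          simpa using hcw.tendsto z
        have hc : ContinuousAt (fun u : ℝ => u ^ α) 0 :=
          Real.continuousAt_rpow_const 0 α (Or.inr hα.le)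
        have := (hc.tendsto.comp hb).const_mul L
        simpa [Real.zero_rpow (ne_of_gt hα)] using this
      have := hten.add (tendsto_const_nhds (x := gU z))
      simp only [sub_add_cancel, zero_add] at this
      exact this
    set v := y - x with hv
    set h : ℝ → ℝ := fun t => U (x + t • v) with hh
    set g : ℝ → ℝ := fun t => ⟪gU (x + t • v), v⟫_ℝ with hg
    have hline : ∀ s t : ℝ, (x + s • v) - (x + t • v) = (s - t) • v := by
      intro s t
      rw [add_sub_add_left_eq_sub, ← sub_smul]
    have hlow : ∀ s t : ℝ, h t + g t * (s - t) ≤ h s := by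
      intro s t
      have h1 := hconv (x + t • v) (x + s • v)
      rw [hline s t, real_inner_smul_right] at h1
      simpa [hh, hg, mul_comm] using h1
    have hgdiff : ∀ s t : ℝ, |g s - g t| ≤ (L * ‖v‖ ^ α * ‖v‖) * |s - t| ^ α := by
      intro s t
      rw [hg]
      have h1 : ⟪gU (x + s • v), v⟫_ℝ - ⟪gU (x + t • v), v⟫_ℝ
          = ⟪gU (x + s • v) - gU (x + t • v), v⟫_ℝ := by
        rw [inner_sub_left]
      rw [h1]
      calc |⟪gU (x + s • v) - gU (x + t • v), v⟫_ℝ|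
          ≤ ‖gU (x + s • v) - gU (x + t • v)‖ * ‖v‖ := abs_real_inner_le_norm _ _
        _ ≤ (L * ‖(x + s • v) - (x + t • v)‖ ^ α) * ‖v‖ :=
            mul_le_mul_of_nonneg_right (hHolder _ _) (norm_nonneg _)
        _ = (L * ‖v‖ ^ α * ‖v‖) * |s - t| ^ α := by
            rw [hline s t, norm_smul, Real.norm_eq_abs,
              Real.mul_rpow (abs_nonneg _) (norm_nonneg _)]
            ring
    have hderiv : ∀ t : ℝ, HasDerivAt h (g t) t := by
      intro t
      rw [hasDerivAt_iff_isLittleO]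
      rw [Asymptotics.isLittleO_iff]
      intro c hc
      set K := L * ‖v‖ ^ α * ‖v‖ with hK
      have hK0 : 0 ≤ K := by
        rw [hK]; positivity
      have htend : Filter.Tendsto (fun s : ℝ => |s - t| ^ α) (nhds t) (nhds 0) := by
        have hcw : Continuous (fun s : ℝ => |s - t|) := (continuous_id.sub continuous_const).abs
        have hb : Filter.Tendsto (fun s : ℝ => |s - t|) (nhds t) (nhds 0) := by
          simpa using hcw.tendsto t
        have hc2 : ContinuousAt (fun u : ℝ => u ^ α) 0 :=
          Real.continuousAt_rpow_const 0 α (Or.inr hα.le)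
        have := hc2.tendsto.comp hb
        simpa [Function.comp_def, Real.zero_rpow (ne_of_gt hα)] using this
      have hev : ∀ᶠ s in nhds t, |s - t| ^ α < c / (K + 1) :=
        htend.eventually (gt_mem_nhds (by positivity : (0:ℝ) < c / (K + 1)))
      filter_upwards [hev] with s hs
      have hlow1 : 0 ≤ h s - h t - g t * (s - t) := by
        have := hlow s t
        linarith
      have hup1 : h s - h t - g t * (s - t) ≤ (g s - g t) * (s - t) := by
        have h2 := hlow t s
        nlinarith [h2]
      have habs : |h s - h t - g t * (s - t)| ≤ |g s - g t| * |s - t| := by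
        rw [abs_of_nonneg hlow1]
        calc h s - h t - g t * (s - t) ≤ (g s - g t) * (s - t) := hup1
          _ ≤ |(g s - g t) * (s - t)| := le_abs_self _
          _ = |g s - g t| * |s - t| := abs_mul _ _
      have hfinal : |g s - g t| * |s - t| ≤ c * |s - t| := by
        have h3 := hgdiff s t
        have h4 : K * |s - t| ^ α ≤ K * (c / (K + 1)) :=
          mul_le_mul_of_nonneg_left hs.le hK0
        have h5 : K * (c / (K + 1)) ≤ c := by
          rw [div_eq_inv_mul, ← mul_assoc]
          have : K * (K + 1)⁻¹ ≤ 1 := by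
            rw [mul_inv_le_iff₀ (by linarith)]
            linarith
          nlinarith
        have h6 : |g s - g t| ≤ c := le_trans h3 (le_trans h4 h5)
        exact mul_le_mul_of_nonneg_right h6 (abs_nonneg _)
      calc ‖h s - h t - (s - t) • g t‖ = |h s - h t - g t * (s - t)| := by
            rw [Real.norm_eq_abs, smul_eq_mul]
            ring_nf
        _ ≤ |g s - g t| * |s - t| := habs
        _ ≤ c * |s - t| := hfinal
        _ = c * ‖s - t‖ := by rw [Real.norm_eq_abs]
    have hcontg : Continuous g := by
      apply Continuous.inner
      · exact hgcont.comp (continuous_const.add (continuous_id.smul continuous_const))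
      · exact continuous_const
    have hFTC : ∫ t in (0:ℝ)..1, g t = h 1 - h 0 :=
      intervalIntegral.integral_eq_sub_of_hasDerivAt (fun t _ => hderiv t)
        (hcontg.intervalIntegrable 0 1)
    have hsub : ∫ t in (0:ℝ)..1, g t = g 0 + ∫ t in (0:ℝ)..1, (g t - g 0) := by
      rw [intervalIntegral.integral_sub (hcontg.intervalIntegrable 0 1)
        intervalIntegrable_const, intervalIntegral.integral_const]
      simp
    have hptb : ∀ t ∈ Set.Icc (0:ℝ) 1, g t - g 0 ≤ (L * ‖v‖ ^ α * ‖v‖) * t ^ α := by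
      intro t ht
      have h1 := hgdiff t 0
      have h2 : |t - 0| = t := by rw [sub_zero, abs_of_nonneg ht.1]
      rw [h2] at h1
      linarith [le_abs_self (g t - g 0), h1]
    have hintmono : ∫ t in (0:ℝ)..1, (g t - g 0)
        ≤ ∫ t in (0:ℝ)..1, (L * ‖v‖ ^ α * ‖v‖) * t ^ α := by
      refine intervalIntegral.integral_mono_on zero_le_one
        ((hcontg.sub continuous_const).intervalIntegrable 0 1)
        ((intervalIntegral.intervalIntegrable_rpow' (by linarith : (-1:ℝ) < α)).const_mul _)
        hptb
    have hintval : ∫ t in (0:ℝ)..1, (L * ‖v‖ ^ α * ‖v‖) * t ^ α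
        = (L * ‖v‖ ^ α * ‖v‖) / (1 + α) := by
      rw [intervalIntegral.integral_const_mul, integral_rpow (Or.inl (by linarith : (-1:ℝ) < α))]
      rw [Real.one_rpow, Real.zero_rpow (by linarith : α + 1 ≠ 0)]
      rw [add_comm α 1]
      ring
    have hnorm_split : ‖v‖ ^ α * ‖v‖ = ‖v‖ ^ (1 + α) := by
      rw [Real.rpow_add' (norm_nonneg v) (by linarith : (1:ℝ) + α ≠ 0), Real.rpow_one]
      ring
    have hy1 : h 1 = U y := by
      rw [hh]
      simp [hv]
    have hx0 : h 0 = U x := by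
      rw [hh]
      simp
    have hg0 : g 0 = ⟪gU x, y - x⟫_ℝ := by
      rw [hg]
      simp [hv]
    have : h 1 - h 0 ≤ g 0 + (L * ‖v‖ ^ α * ‖v‖) / (1 + α) := by
      rw [← hFTC, hsub]
      have := hintmono.trans hintval.le
      linarith
    rw [hy1, hx0, hg0] at this
    have heq : (L * ‖v‖ ^ α * ‖v‖) / (1 + α) = L / (1 + α) * ‖y - x‖ ^ (1 + α) := by
      rw [mul_assoc, hnorm_split, hv]
      ring
    linarith [this, heq.le, heq.ge]

end Descent

section Sandwich

variable {d : ℕ}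

lemma quad_id (lam : ℝ) (x' x y : EuclideanSpace ℝ (Fin d)) :
    lam / 2 * ‖y - x'‖ ^ 2
      = lam / 2 * ‖x - x'‖ ^ 2 + ⟪lam • (x - x'), y - x⟫_ℝ + lam / 2 * ‖y - x‖ ^ 2 := by
  have h := norm_add_sq_real (y - x) (x - x')
  have h2 : (y - x) + (x - x') = y - x' := by abel
  rw [h2] at h
  rw [real_inner_smul_left]
  have hcomm : ⟪y - x, x - x'⟫_ℝ = ⟪x - x', y - x⟫_ℝ := real_inner_comm (x - x') (y - x)
  linear_combination (lam / 2) * h + lam * hcomm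

lemma V_lower (U : EuclideanSpace ℝ (Fin d) → ℝ)
    (gU : EuclideanSpace ℝ (Fin d) → EuclideanSpace ℝ (Fin d)) (lam : ℝ) (hlam : 0 < lam)
    (x' : EuclideanSpace ℝ (Fin d))
    (hconv : ∀ x y, U x + ⟪gU x, y - x⟫_ℝ ≤ U y)
    (x y : EuclideanSpace ℝ (Fin d)) :
    (U x + lam / 2 * ‖x - x'‖ ^ 2) + ⟪gU x + lam • (x - x'), y - x⟫_ℝ
      ≤ U y + lam / 2 * ‖y - x'‖ ^ 2 := by
  have h1 := hconv x y
  have h2 := quad_id lam x' x y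
  rw [inner_add_left]
  nlinarith [sq_nonneg ‖y - x‖]

lemma V_upper (U : EuclideanSpace ℝ (Fin d) → ℝ)
    (gU : EuclideanSpace ℝ (Fin d) → EuclideanSpace ℝ (Fin d))
    (L α lam : ℝ) (hL : 0 ≤ L) (hα0 : 0 ≤ α) (hα1 : α ≤ 1) (hlam : 0 < lam)
    (x' : EuclideanSpace ℝ (Fin d))
    (hconv : ∀ x y, U x + ⟪gU x, y - x⟫_ℝ ≤ U y)
    (hHolder : ∀ x y, ‖gU x - gU y‖ ≤ L * ‖x - y‖ ^ α)
    (x y : EuclideanSpace ℝ (Fin d)) :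
    U y + lam / 2 * ‖y - x'‖ ^ 2
      ≤ (U x + lam / 2 * ‖x - x'‖ ^ 2) + ⟪gU x + lam • (x - x'), y - x⟫_ℝ
        + L / (1 + α) * ‖y - x‖ ^ (1 + α) + lam / 2 * ‖y - x‖ ^ 2 := by
  have h1 := descent_lemma U gU L α hL hα0 hα1 hconv hHolder x y
  have h2 := quad_id lam x' x y
  rw [inner_add_left]
  linarith

lemma U_continuous (U : EuclideanSpace ℝ (Fin d) → ℝ)
    (gU : EuclideanSpace ℝ (Fin d) → EuclideanSpace ℝ (Fin d))
    (L α : ℝ) (hL : 0 ≤ L) (hα0 : 0 ≤ α) (hα1 : α ≤ 1)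
    (hconv : ∀ x y, U x + ⟪gU x, y - x⟫_ℝ ≤ U y)
    (hHolder : ∀ x y, ‖gU x - gU y‖ ≤ L * ‖x - y‖ ^ α) :
    Continuous U := by
  rw [continuous_iff_continuousAt]
  intro x
  have hub : ∀ y, |U y - U x - ⟪gU x, y - x⟫_ℝ| ≤ L / (1 + α) * ‖y - x‖ ^ (1 + α) := by
    intro y
    have h1 := hconv x y
    have h2 := descent_lemma U gU L α hL hα0 hα1 hconv hHolder x y
    have h1α : (0:ℝ) < 1 + α := by linarith
    have hpos : 0 ≤ L / (1 + α) * ‖y - x‖ ^ (1 + α) := by positivity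
    rw [abs_le]
    exact ⟨by linarith, by linarith⟩
  have hzero : Filter.Tendsto (fun y => U y - U x - ⟪gU x, y - x⟫_ℝ) (nhds x) (nhds 0) := by
    refine squeeze_zero_norm (a := fun y => L / (1 + α) * ‖y - x‖ ^ (1 + α))
      (fun y => by rw [Real.norm_eq_abs]; exact hub y) ?_
    have hcw : Continuous (fun y : EuclideanSpace ℝ (Fin d) =>
        L / (1 + α) * ‖y - x‖ ^ (1 + α)) := by
      refine continuous_const.mul ?_
      exact ((continuous_id.sub continuous_const).norm).rpow_const
        (fun z => Or.inr (by linarith))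
    have := hcw.tendsto x
    simpa [Real.zero_rpow (by positivity : (1:ℝ) + α ≠ 0)] using this
  have hlin : Filter.Tendsto (fun y => ⟪gU x, y - x⟫_ℝ + U x) (nhds x) (nhds (U x)) := by
    have hc : Continuous (fun y : EuclideanSpace ℝ (Fin d) => ⟪gU x, y - x⟫_ℝ + U x) :=
      (continuous_const.inner (continuous_id.sub continuous_const)).add continuous_const
    have := hc.tendsto x
    simpa using this
  have := hzero.add hlin
  rw [zero_add] at this
  refine this.congr ?_
  intro y
  ring

end Sandwich

section Smooth

variable {d : ℕ}

lemma smoothing_sandwich (U : EuclideanSpace ℝ (Fin d) → ℝ)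
    (gU : EuclideanSpace ℝ (Fin d) → EuclideanSpace ℝ (Fin d))
    (L α lam μ : ℝ) (x' : EuclideanSpace ℝ (Fin d))
    (hL : 0 ≤ L) (hα0 : 0 ≤ α) (hα1 : α ≤ 1) (hlam : 0 < lam) (hμ : 0 < μ)
    (hconv : ∀ x y, U x + ⟪gU x, y - x⟫_ℝ ≤ U y)
    (hHolder : ∀ x y, ‖gU x - gU y‖ ≤ L * ‖x - y‖ ^ α)
    (x : EuclideanSpace ℝ (Fin d)) :
    (U x + lam / 2 * ‖x - x'‖ ^ 2)
        ≤ (∫ ξ, (U (x + μ • ξ) + lam / 2 * ‖x + μ • ξ - x'‖ ^ 2) ∂(stdGaussian d))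
    ∧ (∫ ξ, (U (x + μ • ξ) + lam / 2 * ‖x + μ • ξ - x'‖ ^ 2) ∂(stdGaussian d))
        ≤ (U x + lam / 2 * ‖x - x'‖ ^ 2)
          + (L * μ ^ (1 + α) * (d:ℝ) ^ ((1 + α) / 2) / (1 + α) + lam * μ ^ 2 * (d:ℝ) / 2) := by
  have h1α : (0:ℝ) < 1 + α := by linarith
  set V : EuclideanSpace ℝ (Fin d) → ℝ := fun z => U z + lam / 2 * ‖z - x'‖ ^ 2 with hV
  set g : EuclideanSpace ℝ (Fin d) := gU x + lam • (x - x') with hg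
  set C2 : ℝ := L / (1 + α) * μ ^ (1 + α) with hC2
  set C3 : ℝ := lam / 2 * μ ^ 2 with hC3
  have hC2nn : 0 ≤ C2 := by
    rw [hC2]
    have : (0:ℝ) ≤ μ ^ (1 + α) := Real.rpow_nonneg hμ.le _
    positivity
  have hdiff : ∀ ξ : EuclideanSpace ℝ (Fin d), (x + μ • ξ) - x = μ • ξ := fun ξ =>
    add_sub_cancel_left x (μ • ξ)
  have hnsmul : ∀ ξ : EuclideanSpace ℝ (Fin d), ‖μ • ξ‖ = μ * ‖ξ‖ := fun ξ => by
    rw [norm_smul, Real.norm_eq_abs, abs_of_pos hμ]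
  have hrpow : ∀ ξ : EuclideanSpace ℝ (Fin d), ‖μ • ξ‖ ^ (1 + α) = μ ^ (1 + α) * ‖ξ‖ ^ (1 + α) :=
    fun ξ => by rw [hnsmul, Real.mul_rpow hμ.le (norm_nonneg _)]
  have hlow : ∀ ξ, V x + μ * ⟪g, ξ⟫_ℝ ≤ V (x + μ • ξ) := by
    intro ξ
    have h := V_lower U gU lam hlam x' hconv x (x + μ • ξ)
    rw [hdiff ξ, real_inner_smul_right] at h
    simpa [hV, hg] using h
  have hup : ∀ ξ, V (x + μ • ξ) ≤ V x + μ * ⟪g, ξ⟫_ℝ + C2 * ‖ξ‖ ^ (1 + α) + C3 * ‖ξ‖ ^ 2 := by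
    intro ξ
    have h := V_upper U gU L α lam hL hα0 hα1 hlam x' hconv hHolder x (x + μ • ξ)
    rw [hdiff ξ, real_inner_smul_right, hrpow ξ] at h
    have hsq : ‖μ • ξ‖ ^ 2 = μ ^ 2 * ‖ξ‖ ^ 2 := by
      rw [hnsmul]; ring
    rw [hsq] at h
    have : L / (1 + α) * (μ ^ (1 + α) * ‖ξ‖ ^ (1 + α)) = C2 * ‖ξ‖ ^ (1 + α) := by
      rw [hC2]; ring
    rw [this] at h
    have h2 : lam / 2 * (μ ^ 2 * ‖ξ‖ ^ 2) = C3 * ‖ξ‖ ^ 2 := by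
      rw [hC3]; ring
    rw [h2] at h
    simpa [hV, hg] using h
  have hVcont : Continuous V := by
    rw [hV]
    exact (U_continuous U gU L α hL hα0 hα1 hconv hHolder).add
      (continuous_const.mul ((continuous_id.sub continuous_const).norm.pow 2))
  have hI1 : Integrable (fun ξ : EuclideanSpace ℝ (Fin d) => μ * ⟪g, ξ⟫_ℝ) (stdGaussian d) :=
    (integrable_inner_stdGaussian g).const_mul μ
  have hI2 : Integrable (fun ξ : EuclideanSpace ℝ (Fin d) => C2 * ‖ξ‖ ^ (1 + α)) (stdGaussian d) :=
    (integrable_rpow_norm_stdGaussian (by linarith) (by linarith)).const_mul _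
  have hI3 : Integrable (fun ξ : EuclideanSpace ℝ (Fin d) => C3 * ‖ξ‖ ^ 2) (stdGaussian d) :=
    integrable_norm_sq_stdGaussian.const_mul _
  have hInorm : Integrable (fun ξ : EuclideanSpace ℝ (Fin d) => μ * ‖g‖ * ‖ξ‖) (stdGaussian d) :=
    integrable_norm_stdGaussian.const_mul _
  have hIV : Integrable (fun ξ => V (x + μ • ξ)) (stdGaussian d) := by
    refine Integrable.mono' ((((integrable_const |V x|).add hInorm).add hI2).add hI3) ?_ ?_
    · exact (hVcont.comp (continuous_const.add (continuous_id.const_smul μ))).aestronglyMeasurable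
    · filter_upwards with ξ
      have habs := abs_le.mp (abs_real_inner_le_norm g ξ)
      have ht2 : 0 ≤ C2 * ‖ξ‖ ^ (1 + α) := by
        have := Real.rpow_nonneg (norm_nonneg ξ) (1 + α)
        positivity
      have ht3 : 0 ≤ C3 * ‖ξ‖ ^ 2 := by positivity
      have hl := hlow ξ
      have hu := hup ξ
      have hmu1 : μ * (-(‖g‖ * ‖ξ‖)) ≤ μ * ⟪g, ξ⟫_ℝ :=
        mul_le_mul_of_nonneg_left habs.1 hμ.le
      have hmu2 : μ * ⟪g, ξ⟫_ℝ ≤ μ * (‖g‖ * ‖ξ‖) :=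
        mul_le_mul_of_nonneg_left habs.2 hμ.le
      have hassoc : μ * (‖g‖ * ‖ξ‖) = μ * ‖g‖ * ‖ξ‖ := by ring
      have hassoc2 : μ * (-(‖g‖ * ‖ξ‖)) = -(μ * ‖g‖ * ‖ξ‖) := by ring
      simp only [Pi.add_apply, Real.norm_eq_abs]
      rw [abs_le]
      constructor
      · linarith [hl, hmu1, ht2, ht3, neg_abs_le (V x), hassoc2.le, hassoc2.ge]
      · linarith [hu, hmu2, le_abs_self (V x), hassoc.le, hassoc.ge]
  have hWeq : (∫ ξ, (U (x + μ • ξ) + lam / 2 * ‖x + μ • ξ - x'‖ ^ 2) ∂(stdGaussian d))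
      = ∫ ξ, V (x + μ • ξ) ∂(stdGaussian d) := by
    rfl
  rw [hWeq]
  constructor
  · have hmono := integral_mono ((integrable_const (V x)).add hI1) hIV hlow
    simp only [Pi.add_apply] at hmono
    rw [integral_add (integrable_const (V x)) hI1, integral_const, integral_const_mul,
      integral_inner_stdGaussian] at hmono
    simpa [hV, measure_univ] using hmono
  · have hmono := integral_mono hIV ((((integrable_const (V x)).add hI1).add hI2).add hI3) hup
    simp only [Pi.add_apply] at hmono
    have hIa : Integrable (fun ξ : EuclideanSpace ℝ (Fin d) => V x + μ * ⟪g, ξ⟫_ℝ)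
        (stdGaussian d) := (integrable_const _).add hI1
    have hIb : Integrable (fun ξ : EuclideanSpace ℝ (Fin d) =>
        V x + μ * ⟪g, ξ⟫_ℝ + C2 * ‖ξ‖ ^ (1 + α)) (stdGaussian d) := hIa.add hI2
    rw [integral_add hIb hI3, integral_add hIa hI2,
      integral_add (integrable_const (V x)) hI1, integral_const, integral_const_mul,
      integral_inner_stdGaussian, integral_const_mul, integral_const_mul,
      integral_norm_sq_stdGaussian] at hmono
    have hE := integral_rpow_norm_stdGaussian_le (d := d) (β := 1 + α)
      (by linarith) (by linarith)
    have hstep : C2 * ∫ ξ, ‖ξ‖ ^ (1 + α) ∂(stdGaussian d) ≤ C2 * (d:ℝ) ^ ((1 + α)/2) :=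
      mul_le_mul_of_nonneg_left hE hC2nn
    have hfin : C2 * (d:ℝ) ^ ((1 + α)/2) = L * μ ^ (1 + α) * (d:ℝ) ^ ((1 + α) / 2) / (1 + α) := by
      rw [hC2]; ring
    have hfin3 : C3 * (d:ℝ) = lam * μ ^ 2 * (d:ℝ) / 2 := by
      rw [hC3]; ring
    simp only [measure_univ, probReal_univ, ENNReal.toReal_one, smul_eq_mul, one_mul, mul_zero, add_zero] at hmono
    calc ∫ ξ, V (x + μ • ξ) ∂(stdGaussian d)
        ≤ V x + C2 * ∫ ξ, ‖ξ‖ ^ (1 + α) ∂(stdGaussian d) + C3 * (d:ℝ) := by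
          linarith [hmono]
      _ ≤ V x + C2 * (d:ℝ) ^ ((1 + α)/2) + C3 * (d:ℝ) := by linarith [hstep]
      _ = V x + (L * μ ^ (1 + α) * (d:ℝ) ^ ((1 + α) / 2) / (1 + α) + lam * μ ^ 2 * (d:ℝ) / 2) := by
          rw [hfin, hfin3]; ring

end Smooth

section Final

lemma tv_frac_bound {k zv zw pv qw pvc qwc : ℝ}
    (hk1 : 1 ≤ k) (hzw : 0 < zw) (hzv : 0 < zv) (hzvk : zv ≤ k * zw) (hzwzv : zw ≤ zv)
    (hqw0 : 0 ≤ qw) (hpvc0 : 0 ≤ pvc) (hqwc0 : 0 ≤ qwc) (hqp : qw ≤ pv) (hqpc : qwc ≤ pvc)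
    (hsv : pv + pvc = zv) (hsw : qw + qwc = zw) :
    |pv / zv - qw / zw| ≤ 1 - k⁻¹ := by
  have hk0 : (0:ℝ) < k := lt_of_lt_of_le one_pos hk1
  have hpv0 : 0 ≤ pv := le_trans hqw0 hqp
  have hinv : k⁻¹ ≤ zw / zv := by
    rw [le_div_iff₀ hzv]
    have h1 : k⁻¹ * zv ≤ k⁻¹ * (k * zw) := mul_le_mul_of_nonneg_left hzvk (by positivity)
    have h2 : k⁻¹ * (k * zw) = zw := by field_simp
    linarith
  have hupper : pv / zv - qw / zw ≤ 1 - k⁻¹ := by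
    have s1 : qw / zv ≤ qw / zw := by gcongr
    have s2 : pv / zv - qw / zv = (pv - qw) / zv := by ring
    have s3 : (pv - qw) / zv ≤ (zv - zw) / zv := by
      gcongr ?_ / zv
      linarith
    have s4 : (zv - zw) / zv = 1 - zw / zv := by
      rw [sub_div, div_self (ne_of_gt hzv)]
    linarith
  have hlower : qw / zw - pv / zv ≤ 1 - k⁻¹ := by
    have s1 : qw / zv ≤ pv / zv := by gcongr
    have s2 : qw / zw - qw / zv = qw * (zw⁻¹ - zv⁻¹) := by ring
    have s5 : 0 ≤ zw⁻¹ - zv⁻¹ := by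
      have := one_div_le_one_div_of_le hzw hzwzv
      rw [one_div, one_div] at this
      linarith
    have hqwzw : qw ≤ zw := by linarith
    have s3 : qw * (zw⁻¹ - zv⁻¹) ≤ zw * (zw⁻¹ - zv⁻¹) :=
      mul_le_mul_of_nonneg_right hqwzw s5
    have s4 : zw * (zw⁻¹ - zv⁻¹) = 1 - zw / zv := by
      rw [mul_sub, mul_inv_cancel₀ (ne_of_gt hzw), div_eq_mul_inv]
    linarith
  rw [abs_le]
  exact ⟨by linarith, hupper⟩

end Final

/-- The probability measure on `ℝ^d` with density proportional to `exp (-V)`. -/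
noncomputable def gibbs {d : ℕ} (V : EuclideanSpace ℝ (Fin d) → ℝ) :
    Measure (EuclideanSpace ℝ (Fin d)) :=
  (∫⁻ x, ENNReal.ofReal (Real.exp (-V x)))⁻¹ •
    volume.withDensity fun x => ENNReal.ofReal (Real.exp (-V x))

/-- Total variation distance between two measures on `ℝ^d`. -/
noncomputable def tvDist {d : ℕ} (P Q : Measure (EuclideanSpace ℝ (Fin d))) : ℝ :=
  ⨆ A : {A : Set (EuclideanSpace ℝ (Fin d)) // MeasurableSet A},
    |(P A.1).toReal - (Q A.1).toReal|

/-- Let `U` be `(L, α)`-weakly smooth, `x' ∈ ℝ^d`, `λ > 0`, `μ > 0`, and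
`Ū x = U x + (λ/2) ‖x - x'‖²`. Then with `p̄* ∝ exp (-Ū)` and `p̄*_μ ∝ exp (-Ū_μ)`,
`‖p̄* - p̄*_μ‖_TV ≤ L μ^{1+α} d^{(1+α)/2} / (1+α) + λ μ² d / 2`. -/
theorem tv_gibbs_smoothing_bound {d : ℕ}
    (U : EuclideanSpace ℝ (Fin d) → ℝ)
    (gU : EuclideanSpace ℝ (Fin d) → EuclideanSpace ℝ (Fin d))
    (L α lam μ : ℝ) (x' : EuclideanSpace ℝ (Fin d))
    (hL : 0 ≤ L) (hα0 : 0 ≤ α) (hα1 : α ≤ 1) (hlam : 0 < lam) (hμ : 0 < μ)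
    (hconv : ∀ x y, U x + ⟪gU x, y - x⟫_ℝ ≤ U y)
    (hHolder : ∀ x y, ‖gU x - gU y‖ ≤ L * ‖x - y‖ ^ α) :
    tvDist (gibbs (fun x => U x + lam / 2 * ‖x - x'‖ ^ 2))
        (gibbs (fun x => ∫ ξ, (U (x + μ • ξ) + lam / 2 * ‖x + μ • ξ - x'‖ ^ 2)
          ∂(stdGaussian d))) ≤
      L * μ ^ (1 + α) * (d : ℝ) ^ ((1 + α) / 2) / (1 + α) + lam * μ ^ 2 * d / 2 := by
  classical
  have h1α : (0:ℝ) < 1 + α := by linarith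
  set c : ℝ := L * μ ^ (1 + α) * (d : ℝ) ^ ((1 + α) / 2) / (1 + α) + lam * μ ^ 2 * d / 2 with hc
  have hc0 : 0 ≤ c := by
    rw [hc]
    have h1 : (0:ℝ) ≤ μ ^ (1 + α) := Real.rpow_nonneg hμ.le _
    have h2 : (0:ℝ) ≤ (d:ℝ) ^ ((1 + α) / 2) := Real.rpow_nonneg (Nat.cast_nonneg d) _
    positivity
  set Vf : EuclideanSpace ℝ (Fin d) → ℝ := fun x => U x + lam / 2 * ‖x - x'‖ ^ 2 with hVf
  set Wf : EuclideanSpace ℝ (Fin d) → ℝ := fun x =>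
    ∫ ξ, (U (x + μ • ξ) + lam / 2 * ‖x + μ • ξ - x'‖ ^ 2) ∂(stdGaussian d) with hWf
  have hsand : ∀ x, Vf x ≤ Wf x ∧ Wf x ≤ Vf x + c := fun x =>
    smoothing_sandwich U gU L α lam μ x' hL hα0 hα1 hlam hμ hconv hHolder x
  have hVcont : Continuous Vf := (U_continuous U gU L α hL hα0 hα1 hconv hHolder).add
    (continuous_const.mul ((continuous_id.sub continuous_const).norm.pow 2))
  unfold tvDist gibbs
  set fV : EuclideanSpace ℝ (Fin d) → ℝ≥0∞ :=
    fun x => ENNReal.ofReal (Real.exp (-Vf x)) with hfV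
  set fW : EuclideanSpace ℝ (Fin d) → ℝ≥0∞ :=
    fun x => ENNReal.ofReal (Real.exp (-Wf x)) with hfW
  have hfVmeas : Measurable fV := (hVcont.neg.rexp).measurable.ennreal_ofReal
  set w : EuclideanSpace ℝ (Fin d) := -gU 0 with hw
  have hlb : ∀ y, Real.exp (-Vf y) ≤ Real.exp (-(U 0) + ⟪w, x'⟫_ℝ) *
      Real.exp (-(lam/2) * ‖y - x'‖ ^ 2 + ⟪w, y - x'⟫_ℝ) := by
    intro y
    rw [← Real.exp_add]
    apply Real.exp_le_exp.mpr
    have h1 := hconv 0 y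
    rw [sub_zero] at h1
    have h2 : ⟪w, y - x'⟫_ℝ = ⟪w, y⟫_ℝ - ⟪w, x'⟫_ℝ := by rw [inner_sub_right]
    have h3 : ⟪w, y⟫_ℝ = -⟪gU 0, y⟫_ℝ := by rw [hw, inner_neg_left]
    simp only [hVf]
    linarith [h1, h2.le, h2.ge, h3.le, h3.ge]
  have henv : Integrable (fun y : EuclideanSpace ℝ (Fin d) =>
      Real.exp (-(U 0) + ⟪w, x'⟫_ℝ) *
        Real.exp (-(lam/2) * ‖y - x'‖ ^ 2 + ⟪w, y - x'⟫_ℝ)) := by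
    have h0 : Integrable (fun v : EuclideanSpace ℝ (Fin d) =>
        rexp (-(lam/2) * ‖v‖ ^ 2 + ⟪w, v⟫_ℝ)) :=
      integrable_exp_norm_sq_add (by positivity) w
    exact (h0.comp_sub_right x').const_mul _
  set ZV := ∫⁻ x, fV x with hZV
  set ZW := ∫⁻ x, fW x with hZW
  have hZVfin : ZV ≠ ⊤ := by
    have hle : ZV ≤ ∫⁻ y, ENNReal.ofReal (Real.exp (-(U 0) + ⟪w, x'⟫_ℝ) *
        Real.exp (-(lam/2) * ‖y - x'‖ ^ 2 + ⟪w, y - x'⟫_ℝ)) :=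
      lintegral_mono fun y => ENNReal.ofReal_le_ofReal (hlb y)
    exact (lt_of_le_of_lt hle henv.lintegral_lt_top).ne
  have hfVpos : ∀ y, 0 < fV y := fun y => ENNReal.ofReal_pos.mpr (Real.exp_pos _)
  have hZVpos : ZV ≠ 0 := by
    intro h0
    rw [hZV, lintegral_eq_zero_iff hfVmeas] at h0
    have h2 : ∀ᵐ y ∂(volume : Measure (EuclideanSpace ℝ (Fin d))), False :=
      h0.mono fun y hy => (hfVpos y).ne' (by simpa using hy)
    have h3 := Filter.eventually_false_iff_eq_bot.mp h2
    have h4 := MeasureTheory.ae_eq_bot.mp h3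
    have h5 := IsOpen.measure_pos (volume : Measure (EuclideanSpace ℝ (Fin d)))
      isOpen_univ ⟨0, trivial⟩
    rw [h4] at h5
    simp at h5
  have hWV : ∀ y, fW y ≤ fV y := fun y =>
    ENNReal.ofReal_le_ofReal (Real.exp_le_exp.mpr (by linarith [(hsand y).1]))
  have hVW : ∀ y, fV y ≤ ENNReal.ofReal (Real.exp c) * fW y := fun y => by
    rw [← ENNReal.ofReal_mul (Real.exp_nonneg c), ← Real.exp_add]
    exact ENNReal.ofReal_le_ofReal (Real.exp_le_exp.mpr (by linarith [(hsand y).2]))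
  have hZWle : ZW ≤ ZV := lintegral_mono hWV
  have hZWfin : ZW ≠ ⊤ := ne_top_of_le_ne_top hZVfin hZWle
  have hZVle : ZV ≤ ENNReal.ofReal (Real.exp c) * ZW := by
    calc ZV ≤ ∫⁻ y, ENNReal.ofReal (Real.exp c) * fW y := lintegral_mono hVW
      _ = ENNReal.ofReal (Real.exp c) * ZW := lintegral_const_mul' _ _ ENNReal.ofReal_ne_top
  have hZWpos : ZW ≠ 0 := by
    intro h0
    rw [h0, mul_zero] at hZVle
    exact hZVpos (le_zero_iff.mp hZVle)
  set k := Real.exp c with hk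
  have hk1 : 1 ≤ k := Real.one_le_exp hc0
  have hzv : 0 < ZV.toReal := ENNReal.toReal_pos hZVpos hZVfin
  have hzw : 0 < ZW.toReal := ENNReal.toReal_pos hZWpos hZWfin
  have hzwzv : ZW.toReal ≤ ZV.toReal := ENNReal.toReal_mono hZVfin hZWle
  have hzvk : ZV.toReal ≤ k * ZW.toReal := by
    have h := ENNReal.toReal_mono
      (ENNReal.mul_ne_top ENNReal.ofReal_ne_top hZWfin) hZVle
    rwa [ENNReal.toReal_mul, ENNReal.toReal_ofReal (Real.exp_nonneg c)] at h
  have hfinal : 1 - k⁻¹ ≤ c := by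
    rw [hk, ← Real.exp_neg]
    linarith [Real.add_one_le_exp (-c)]
  haveI : Nonempty {A : Set (EuclideanSpace ℝ (Fin d)) // MeasurableSet A} :=
    ⟨⟨Set.univ, MeasurableSet.univ⟩⟩
  refine ciSup_le ?_
  rintro ⟨A, hA⟩
  have hPA : ((ZV⁻¹ • volume.withDensity fV : Measure (EuclideanSpace ℝ (Fin d))) A)
      = ZV⁻¹ * ∫⁻ y in A, fV y := by
    rw [Measure.smul_apply, smul_eq_mul, withDensity_apply _ hA]
  have hQA : ((ZW⁻¹ • volume.withDensity fW : Measure (EuclideanSpace ℝ (Fin d))) A)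
      = ZW⁻¹ * ∫⁻ y in A, fW y := by
    rw [Measure.smul_apply, smul_eq_mul, withDensity_apply _ hA]
  set IVA := ∫⁻ y in A, fV y with hIVA
  set IWA := ∫⁻ y in A, fW y with hIWA
  set IVAc := ∫⁻ y in Aᶜ, fV y with hIVAc
  set IWAc := ∫⁻ y in Aᶜ, fW y with hIWAc
  have hsumV : IVA + IVAc = ZV := by
    have h := measure_add_measure_compl (μ := volume.withDensity fV) hA
    rw [withDensity_apply _ hA, withDensity_apply _ hA.compl,
      withDensity_apply _ MeasurableSet.univ, setLIntegral_univ] at h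
    exact h
  have hsumW : IWA + IWAc = ZW := by
    have h := measure_add_measure_compl (μ := volume.withDensity fW) hA
    rw [withDensity_apply _ hA, withDensity_apply _ hA.compl,
      withDensity_apply _ MeasurableSet.univ, setLIntegral_univ] at h
    exact h
  have hIVAfin : IVA ≠ ⊤ := ne_top_of_le_ne_top hZVfin (le_trans le_self_add hsumV.le)
  have hIVAcfin : IVAc ≠ ⊤ := ne_top_of_le_ne_top hZVfin (le_trans le_add_self hsumV.le)
  have hIWAfin : IWA ≠ ⊤ := ne_top_of_le_ne_top hZWfin (le_trans le_self_add hsumW.le)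
  have hIWAcfin : IWAc ≠ ⊤ := ne_top_of_le_ne_top hZWfin (le_trans le_add_self hsumW.le)
  have hWVA : IWA ≤ IVA := lintegral_mono fun y => hWV y
  have hWVAc : IWAc ≤ IVAc := lintegral_mono fun y => hWV y
  have hsv : IVA.toReal + IVAc.toReal = ZV.toReal := by
    rw [← ENNReal.toReal_add hIVAfin hIVAcfin, hsumV]
  have hsw : IWA.toReal + IWAc.toReal = ZW.toReal := by
    rw [← ENNReal.toReal_add hIWAfin hIWAcfin, hsumW]
  have hbound := tv_frac_bound hk1 hzw hzv hzvk hzwzv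
    (ENNReal.toReal_nonneg (a := IWA)) (ENNReal.toReal_nonneg (a := IVAc))
    (ENNReal.toReal_nonneg (a := IWAc))
    (ENNReal.toReal_mono hIVAfin hWVA) (ENNReal.toReal_mono hIVAcfin hWVAc) hsv hsw
  rw [hPA, hQA, ENNReal.toReal_mul, ENNReal.toReal_mul, ENNReal.toReal_inv, ENNReal.toReal_inv,
    inv_mul_eq_div, inv_mul_eq_div]
  exact le_trans hbound hfinal
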